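/- The direct sum D_id = ⊕_{n<ω} C^n, containing exactly one finite chain of each size n ≥ 1, has exactly 2^{ℵ₀} siblings up to isomorphism. -/

import Mathlib

open Cardinal

/-- Two preorders are equimorphic (siblings) if each order-embeds into the other. -/
def Equimorphic (α : Type*) (β : Type*) [Preorder α] [Preorder β] : Prop :=
  Nonempty (α ↪o β) ∧ Nonempty (β ↪o α)

/-- The setoid identifying order-isomorphic equimorphic substructures. -/
def sibSetoid (α : Type*) [Preorder α] : Setoid {S : Set α // Equimorphic S α} :=
  ⟨fun S T => Nonempty ((S : Set α) ≃o (T : Set α)),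
    ⟨fun _ => ⟨OrderIso.refl _⟩, fun ⟨e⟩ => ⟨e.symm⟩, fun ⟨e⟩ ⟨f⟩ => ⟨e.trans f⟩⟩⟩

/-- The sibling number of a structure: the number of isomorphism classes of
substructures equimorphic to it (every sibling is isomorphic to such a substructure). -/
noncomputable def sibNumber (α : Type*) [Preorder α] : Cardinal :=
  #(Quotient (sibSetoid α))

/-!
Each chain `C^(n+1)` of `D_id` is a comparability class, and order isomorphisms preserve
comparability classes together with their sizes; so the substructures `D_A` made of the chains
`C^(n+1)` with `n ∈ A` are pairwise non-isomorphic. When `A` is infinite, `D_A` is a sibling of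
`D_id`: the chain `C^(n+1)` embeds into the chain belonging to the `n`-th element of `A`. This
gives continuum many siblings, and there are no more since `D_id` is countable.
-/

universe u

open Function Relation

theorem sibNumber_le_two_power (α : Type*) [Preorder α] : sibNumber α ≤ 2 ^ #α :=
  mk_quotient_le.trans <| (mk_subtype_le _).trans_eq mk_set

theorem mk_le_sibNumber {α ι : Type u} [Preorder α] (S : ι → Set α)
    (hS : ∀ i, Equimorphic (S i) α) (hinj : ∀ i j, Nonempty (S i ≃o S j) → i = j) :
    #ι ≤ sibNumber α :=
  mk_le_of_injective (f := fun i => Quotient.mk (sibSetoid α) ⟨S i, hS i⟩)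
    fun i j h => hinj i j (Quotient.exact h)

def OrderIso.symmGenEquiv {α β : Type*} [Preorder α] [Preorder β] (φ : α ≃o β) (x : α) :
    {y // SymmGen (· ≤ ·) x y} ≃ {y // SymmGen (· ≤ ·) (φ x) y} :=
  φ.toEquiv.subtypeEquiv fun y => by simp [SymmGen]

namespace Sigma

variable {ι : Type*} {α : ι → Type*}

theorem symmGen_iff_fst_eq [∀ i, LinearOrder (α i)] {x y : Σ i, α i} :
    SymmGen (· ≤ ·) x y ↔ x.1 = y.1 := by
  obtain ⟨i, a⟩ := x
  obtain ⟨j, b⟩ := y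
  constructor
  · rintro (⟨_, _, _, _⟩ | ⟨_, _, _, _⟩) <;> rfl
  · rintro rfl
    exact (le_total a b).imp mk_le_mk_iff.2 mk_le_mk_iff.2

def symmGenEquivFiber [∀ i, LinearOrder (α i)] {A : Set ι}
    (x : (Sigma.fst ⁻¹' A : Set (Σ i, α i))) :
    {y : (Sigma.fst ⁻¹' A : Set (Σ i, α i)) // SymmGen (· ≤ ·) x y} ≃ α x.1.1 :=
  (Equiv.subtypeEquivRight fun _ => symmGen_iff_fst_eq.trans eq_comm).trans <|
    (Equiv.subtypeSubtypeEquivSubtype fun {y : Σ i, α i} (h : y.1 = x.1.1) =>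
      show y.1 ∈ A from h ▸ x.2).trans (Equiv.sigmaSubtype _)

theorem exists_equiv_fiber_of_orderIso_preimage_fst [∀ i, LinearOrder (α i)] {A B : Set ι}
    (φ : (Sigma.fst ⁻¹' A : Set (Σ i, α i)) ≃o (Sigma.fst ⁻¹' B : Set (Σ i, α i)))
    {i : ι} (hi : i ∈ A) (a : α i) : ∃ j ∈ B, Nonempty (α i ≃ α j) :=
  let x : (Sigma.fst ⁻¹' A : Set (Σ i, α i)) := ⟨⟨i, a⟩, hi⟩
  ⟨(φ x).1.1, (φ x).2,
    ⟨((symmGenEquivFiber x).symm.trans (φ.symmGenEquiv x)).trans (symmGenEquivFiber (φ x))⟩⟩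

end Sigma

def OrderEmbedding.sigmaMap {ι κ : Type*} {α : ι → Type*} {β : κ → Type*} [∀ i, LE (α i)]
    [∀ k, LE (β k)] {f : ι → κ} (hf : Injective f) (g : ∀ i, α i ↪o β (f i)) :
    (Σ i, α i) ↪o Σ k, β k where
  toFun := Sigma.map f fun i => g i
  inj' := hf.sigma_map fun i => (g i).injective
  map_rel_iff' := by
    rintro ⟨i, a⟩ ⟨j, b⟩
    change (⟨f i, g i a⟩ : Σ k, β k) ≤ ⟨f j, g j b⟩ ↔ _
    constructor
    · intro h
      obtain rfl := hf (Sigma.le_def.1 h).1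
      exact Sigma.mk_le_mk_iff.2 ((g i).map_rel_iff.1 (Sigma.mk_le_mk_iff.1 h))
    · rintro ⟨_, _, _, h⟩
      exact Sigma.mk_le_mk_iff.2 ((g _).map_rel_iff.2 h)

theorem subset_of_orderIso_preimage_fst {A B : Set ℕ}
    (φ : (Sigma.fst ⁻¹' A : Set (Σ n : ℕ, Fin (n + 1))) ≃o
      (Sigma.fst ⁻¹' B : Set (Σ n : ℕ, Fin (n + 1)))) : A ⊆ B := fun n hn => by
  obtain ⟨m, hm, e⟩ := Sigma.exists_equiv_fiber_of_orderIso_preimage_fst φ hn 0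
  rwa [Nat.succ_injective (Fin.equiv_iff_eq.1 e)]

theorem equimorphic_preimage_fst_of_infinite {A : Set ℕ} (hA : A.Infinite) :
    Equimorphic (Sigma.fst ⁻¹' A : Set (Σ n : ℕ, Fin (n + 1))) (Σ n : ℕ, Fin (n + 1)) := by
  classical
  have := hA.to_subtype
  let e := Nat.orderEmbeddingOfSet A
  let g := OrderEmbedding.sigmaMap (β := fun k => Fin (k + 1)) e.injective fun n =>
    Fin.castLEOrderEmb (Nat.add_le_add_right (e.strictMono.le_apply (x := n)) 1)
  have hg (x : Σ n : ℕ, Fin (n + 1)) : (g x).1 ∈ A :=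
    Nat.orderEmbeddingOfSet_range A ▸ Set.mem_range_self x.1
  exact ⟨⟨OrderEmbedding.subtype _⟩, ⟨OrderEmbedding.ofMapLEIff (fun x => ⟨g x, hg x⟩)
    fun _ _ => g.le_iff_le⟩⟩

def codeWithEvens (A : Set ℕ) : Set ℕ := Set.range (2 * ·) ∪ (2 * · + 1) '' A

theorem codeWithEvens_infinite (A : Set ℕ) : (codeWithEvens A).Infinite :=
  (Set.infinite_range_of_injective fun a b h => by simpa using h).mono Set.subset_union_left

theorem preimage_codeWithEvens (A : Set ℕ) : (2 * · + 1) ⁻¹' codeWithEvens A = A := by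
  ext n
  simp [codeWithEvens]

theorem codeWithEvens_injective : Injective codeWithEvens := fun A B h => by
  rw [← preimage_codeWithEvens A, h, preimage_codeWithEvens]

theorem sib_Did_continuum : sibNumber (Σ n : ℕ, Fin (n + 1)) = Cardinal.continuum := by
  refine le_antisymm ?_ ?_
  · simpa [mk_eq_aleph0] using sibNumber_le_two_power (Σ n : ℕ, Fin (n + 1))
  · calc 𝔠 = #(Set ℕ) := by simp
      _ ≤ sibNumber (Σ n : ℕ, Fin (n + 1)) :=
        mk_le_sibNumber (fun A => Sigma.fst ⁻¹' codeWithEvens A)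
          (fun A => equimorphic_preimage_fst_of_infinite (codeWithEvens_infinite A))
          fun _ _ ⟨φ⟩ => codeWithEvens_injective <|
            (subset_of_orderIso_preimage_fst φ).antisymm (subset_of_orderIso_preimage_fst φ.symm)
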